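/- In CC/TT the indicative conditional is strictly stronger than the material conditional: for all formulas A, B and all valuations v, v(A →cc B) ≥ 1/2 implies v(¬(A ∧ ¬B)) ≥ 1/2; but there exist atoms A, B and a valuation v with v(¬(A ∧ ¬B)) ≥ 1/2 and v(A →cc B) = 0 (take v(A) = 1/2, v(B) = 0). -/
import Mathlib


/-- Trivalent truth values: 0, 1/2, 1. -/
inductive V : Type
  | zero
  | half
  | one
deriving DecidableEq, Repr

open V

/-- Strong Kleene negation. -/
def vneg : V → V
  | zero => one
  | half => half
  | one => zero

/-- Strong Kleene conjunction (minimum). -/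
def vmin : V → V → V
  | one, b => b
  | half, one => half
  | half, half => half
  | half, zero => zero
  | zero, _ => zero

/-- Strong Kleene disjunction (maximum). -/
def vmax : V → V → V
  | zero, b => b
  | half, zero => half
  | half, half => half
  | half, one => one
  | one, _ => one

/-- de Finetti conditional. -/
def df : V → V → V
  | one, c => c
  | _, _ => half

/-- Cooper–Cantwell conditional. -/
def cc : V → V → V
  | zero, _ => half
  | _, c => c

/-- Cooper's quasi-conjunction. -/
def qand : V → V → V
  | zero, _ => zero
  | _, zero => zero
  | one, _ => one
  | _, one => one
  | half, half => half

/-- Cooper's quasi-disjunction. -/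
def qor : V → V → V
  | one, _ => one
  | _, one => one
  | zero, _ => zero
  | _, zero => zero
  | half, half => half

/-- "value ≥ 1/2", i.e. designated / tolerantly true. -/
def des (x : V) : Prop := x ≠ V.zero

/-- Formulas with negation, conjunction, disjunction and the Cooper–Cantwell
indicative conditional. -/
inductive Form : Type
  | atom : ℕ → Form
  | neg : Form → Form
  | and : Form → Form → Form
  | or : Form → Form → Form
  | cond : Form → Form → Form
deriving DecidableEq

/-- Trivalent CC valuation of formulas, extending a valuation of atoms. -/
def val (v : ℕ → V) : Form → V
  | .atom n => v n
  | .neg A => vneg (val v A)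
  | .and A B => vmin (val v A) (val v B)
  | .or A B => vmax (val v A) (val v B)
  | .cond A B => cc (val v A) (val v B)

/-- The Strong Kleene material conditional A ⊃ B := ¬(A ∧ ¬B). -/
def mat (A B : Form) : Form := Form.neg (Form.and A (Form.neg B))

/-- In CC/TT the indicative conditional is strictly stronger than the
material conditional. -/
theorem cc_strictly_stronger_than_material :
    (∀ (A B : Form) (v : ℕ → V),
      des (val v (Form.cond A B)) → des (val v (mat A B))) ∧
    (∃ (p q : ℕ) (v : ℕ → V),
      des (val v (mat (Form.atom p) (Form.atom q))) ∧
      val v (Form.cond (Form.atom p) (Form.atom q)) = V.zero) := by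
  constructor
  · intro A B v h
    simp only [val, mat, des] at *
    cases hA : val v A <;> cases hB : val v B <;> simp_all [cc, vneg, vmin]
  · exact ⟨0, 1, fun n => if n = 0 then V.half else V.zero, by simp [des, mat, val, vneg, vmin], by simp [val, cc]⟩
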